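/- For any vectors v ∈ ℝ³, E, B, c ∈ ℝ³ and scalars α, β ∈ ℝ, the vector v' produced by the Boris algorithm — namely t = (β/2)B, s = 2t/(1 + t·t), v⁻ = v + (α/2)E + (1/2)c, v* = v⁻ + v⁻ × t, v⁺ = v⁻ + v* × s, v' = v⁺ + (α/2)E + (1/2)c — satisfies the implicit equation v' = v + αE + β((v + v')/2) × B + c. -/

import Mathlib

noncomputable section

/-- Dot product on ℝ³. -/
def dot3 (a b : Fin 3 → ℝ) : ℝ := a 0 * b 0 + a 1 * b 1 + a 2 * b 2

/-- Cross product on ℝ³. -/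
def cross3 (a b : Fin 3 → ℝ) : Fin 3 → ℝ :=
  ![a 1 * b 2 - a 2 * b 1, a 2 * b 0 - a 0 * b 2, a 0 * b 1 - a 1 * b 0]

/-- Euclidean norm on ℝ³. -/
def enorm3 (a : Fin 3 → ℝ) : ℝ := Real.sqrt (dot3 a a)

/-!
With `k = 2 / (1 + t ⬝ᵥ t)`, the vector triple product gives
`w⁺ - w = k • (w ⨯₃ t + (w ⬝ᵥ t) • t - (t ⬝ᵥ t) • w)` for the rotation
`w⁺ = w + (w + w ⨯₃ t) ⨯₃ (k • t)`, and `(w + w⁺) ⨯₃ t = 2 • w ⨯₃ t + (w⁺ - w) ⨯₃ t` is the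
same vector because `k * (1 + t ⬝ᵥ t) = 2`. Applied to `w = v⁻`, and since the two half-kicks
`(α / 2) • E + (1 / 2) • c` give `v + v' = v⁻ + v⁺` and `v' - v = v⁺ - v⁻ + α • E + c`,
this is the implicit update.
-/

open Matrix

theorem cross3_eq_crossProduct (a b : Fin 3 → ℝ) : cross3 a b = a ⨯₃ b := rfl

theorem dot3_eq_dotProduct (a b : Fin 3 → ℝ) : dot3 a b = a ⬝ᵥ b := (vec3_dotProduct a b).symm

section BorisRotation

variable {K : Type*} [Field K]

def borisRotate (t w : Fin 3 → K) : Fin 3 → K :=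
  w + (w + w ⨯₃ t) ⨯₃ ((2 / (1 + t ⬝ᵥ t)) • t)

theorem borisRotate_sub_self (t w : Fin 3 → K) :
    borisRotate t w - w =
      (2 / (1 + t ⬝ᵥ t)) • (w ⨯₃ t + (w ⬝ᵥ t) • t - (t ⬝ᵥ t) • w) := by
  rw [borisRotate, add_sub_cancel_left, map_smul, map_add, LinearMap.add_apply,
    cross_cross_eq_smul_sub_smul, add_sub_assoc]

theorem borisRotate_sub_self_eq_cross (t w : Fin 3 → K) (ht : 1 + t ⬝ᵥ t ≠ 0) :
    borisRotate t w - w = (w + borisRotate t w) ⨯₃ t := by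
  have hk : 2 / (1 + t ⬝ᵥ t) * (1 + t ⬝ᵥ t) = 2 := div_mul_cancel₀ 2 ht
  have hsum : w + borisRotate t w = (2 : K) • w + (borisRotate t w - w) := by module
  rw [hsum, borisRotate_sub_self]
  simp only [map_add, map_sub, map_smul, LinearMap.add_apply, LinearMap.sub_apply,
    LinearMap.smul_apply, cross_cross_eq_smul_sub_smul, cross_self, smul_zero]
  linear_combination (norm := module) hk • (w ⨯₃ t)

end BorisRotation

theorem one_add_dotProduct_self_pos {n K : Type*} [Fintype n] [Field K] [LinearOrder K]
    [IsStrictOrderedRing K] (t : n → K) : 0 < 1 + t ⬝ᵥ t :=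
  add_pos_of_pos_of_nonneg one_pos (Finset.sum_nonneg fun i _ => mul_self_nonneg (t i))

/-- Boris' trick solves the implicit velocity update. -/
theorem boris_trick_solves_implicit_update
    (v E B c : Fin 3 → ℝ) (α β : ℝ) :
    let t := (β / 2) • B
    let s := (2 / (1 + dot3 t t)) • t
    let vminus := v + (α / 2) • E + (1 / 2 : ℝ) • c
    let vstar := vminus + cross3 vminus t
    let vplus := vminus + cross3 vstar s
    let v' := vplus + (α / 2) • E + (1 / 2 : ℝ) • c
    v' = v + α • E + β • cross3 ((1 / 2 : ℝ) • (v + v')) B + c := by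
  intro t s vminus vstar vplus v'
  have hplus : vplus = borisRotate t vminus := by
    simp only [vplus, vstar, s, cross3_eq_crossProduct, dot3_eq_dotProduct, borisRotate]
  have hrotation : vplus - vminus = (vminus + vplus) ⨯₃ t :=
    hplus ▸ borisRotate_sub_self_eq_cross t vminus (one_add_dotProduct_self_pos t).ne'
  have hsum : v + v' = vminus + vplus := by
    simp only [v', vminus]
    module
  have hmid : β • cross3 ((1 / 2 : ℝ) • (v + v')) B = (vminus + vplus) ⨯₃ t := by
    simp only [cross3_eq_crossProduct, hsum, t, map_smul, LinearMap.smul_apply]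
    module
  rw [hmid, ← hrotation]
  module
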